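/- arXiv:1604.01657 — 5 statements merged into one kernel-verified Lean document; each statement's English description precedes it below -/
import Mathlib

section
/- Let u^(1),…,u^(p) be p linearly independent vectors in R^p each of norm at most one, and let w ∈ R^p be a nonzero vector. Then there exist a constant C_p > 0 depending only on p and an index i ∈ {1,…,p} such that |⟨u^(i), w⟩| ≥ C_p · |w| · |det(u^(1),…,u^(p))|. -/
/-!
Put the vectors `u i` as the rows of a matrix `A`, so that `A w` is the vector of pairings
`⟨u i, w⟩`. Cramer's rule `det A • w = adj A (A w)` recovers `w` from the pairings, and the
entries of `adj A` are determinants of matrices with entries in `[-1, 1]`, hence at most `p!` in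
absolute value. So `|det A| ‖w‖_∞ ≤ p · p! · max_i |⟨u i, w⟩|`, and `‖w‖ ≤ √p ‖w‖_∞`.
-/

open Matrix Nat

section
variable {n : Type*} [Fintype n] [DecidableEq n]

theorem Matrix.abs_adjugate_apply_le {R : Type*} [CommRing R] [LinearOrder R]
    [IsStrictOrderedRing R] {A : Matrix n n R} (hA : ∀ i j, |A i j| ≤ 1) (i j : n) :
    |A.adjugate i j| ≤ (Fintype.card n)! := by
  have hrow : ∀ k l, |A.updateRow j (Pi.single i 1) k l| ≤ 1 := by
    intro k l
    rcases eq_or_ne k j with rfl | hk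
    · rw [updateRow_self]
      rcases eq_or_ne l i with rfl | hl <;> simp [*]
    · rw [updateRow_ne hk]; exact hA k l
  simpa [adjugate_apply] using det_le (abv := AbsoluteValue.abs) hrow

theorem Matrix.abs_det_mul_norm_le {A : Matrix n n ℝ} (hA : ∀ i j, |A i j| ≤ 1) (x : n → ℝ) :
    |A.det| * ‖x‖ ≤ Fintype.card n * (Fintype.card n)! * ‖A *ᵥ x‖ := by
  have hdet : A.det • x = A.adjugate *ᵥ (A *ᵥ x) := by
    rw [mulVec_mulVec, adjugate_mul, smul_mulVec, one_mulVec]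
  rw [← Real.norm_eq_abs, ← norm_smul, hdet]
  refine pi_norm_le_iff_of_nonneg (by positivity) |>.2 fun j => ?_
  calc ‖(A.adjugate *ᵥ (A *ᵥ x)) j‖ ≤ ∑ i, |A.adjugate j i| * ‖A *ᵥ x‖ := by
        rw [mulVec, dotProduct, Real.norm_eq_abs]
        refine (Finset.abs_sum_le_sum_abs _ _).trans (Finset.sum_le_sum fun i _ => ?_)
        rw [abs_mul]
        exact mul_le_mul_of_nonneg_left (norm_le_pi_norm (A *ᵥ x) i) (abs_nonneg _)
    _ ≤ ∑ _i : n, ((Fintype.card n)! : ℝ) * ‖A *ᵥ x‖ := by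
        gcongr with i; exact abs_adjugate_apply_le hA j i
    _ = _ := by simp [mul_assoc]

theorem Matrix.abs_det_mul_euclidean_norm_le {A : Matrix n n ℝ} (hA : ∀ i j, |A i j| ≤ 1)
    (x : EuclideanSpace ℝ n) :
    |A.det| * ‖x‖ ≤ √(Fintype.card n) * Fintype.card n * (Fintype.card n)! * ‖A *ᵥ x‖ := by
  have hx : ‖x‖ ≤ √(Fintype.card n) * ‖WithLp.ofLp x‖ := by
    simpa [Real.sqrt_eq_rpow] using
      (PiLp.antilipschitzWith_ofLp 2 (fun _ : n => ℝ)).le_mul_norm rfl x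
  calc |A.det| * ‖x‖ ≤ |A.det| * (√(Fintype.card n) * ‖WithLp.ofLp x‖) := by gcongr
    _ = √(Fintype.card n) * (|A.det| * ‖WithLp.ofLp x‖) := by ring
    _ ≤ √(Fintype.card n) * (Fintype.card n * (Fintype.card n)! * ‖A *ᵥ x‖) :=
        mul_le_mul_of_nonneg_left (abs_det_mul_norm_le hA _) (by positivity)
    _ = _ := by ring
end

theorem Pi.exists_norm_eq_norm_apply {ι : Type*} [Fintype ι] [Nonempty ι] {E : ι → Type*}
    [∀ i, SeminormedAddGroup (E i)] (v : ∀ i, E i) : ∃ i, ‖v‖ = ‖v i‖ := by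
  obtain ⟨i, -, h⟩ := Finset.exists_mem_eq_sup' Finset.univ_nonempty (fun i => ‖v i‖₊)
  refine ⟨i, ?_⟩
  rw [Pi.norm_def, ← Finset.sup'_eq_sup Finset.univ_nonempty, h]
  rfl

theorem pairing_lower_bound (p : ℕ) :
    ∃ C : ℝ, 0 < C ∧
      ∀ u : Fin p → EuclideanSpace ℝ (Fin p),
        LinearIndependent ℝ u →
        (∀ i, ‖u i‖ ≤ 1) →
        ∀ w : EuclideanSpace ℝ (Fin p), w ≠ 0 →
          ∃ i : Fin p,
            C * ‖w‖ * |(Matrix.of fun i j : Fin p => u j i).det| ≤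
              |(inner ℝ (u i) w : ℝ)| := by
  set K : ℝ := √p * p * p.factorial
  have hK : 0 ≤ K := by positivity
  refine ⟨(K + 1)⁻¹, by positivity, fun u _ hu w hw => ?_⟩
  have : Nonempty (Fin p) := by
    by_contra h
    rw [not_nonempty_iff] at h
    exact hw (Subsingleton.elim _ _)
  set A : Matrix (Fin p) (Fin p) ℝ := Matrix.of fun i j => u i j
  have hA : ∀ i j, |A i j| ≤ 1 := fun i j => (PiLp.norm_apply_le (u i) j).trans (hu i)
  have hAw : A *ᵥ WithLp.ofLp w = fun i => inner ℝ (u i) w := by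
    ext i; simp [A, mulVec, dotProduct, PiLp.inner_apply, mul_comm]
  have hdet : (Matrix.of fun i j : Fin p => u j i).det = A.det := by
    rw [← det_transpose]; rfl
  obtain ⟨i, hi⟩ := Pi.exists_norm_eq_norm_apply (A *ᵥ WithLp.ofLp w)
  refine ⟨i, ?_⟩
  calc (K + 1)⁻¹ * ‖w‖ * |(Matrix.of fun i j : Fin p => u j i).det|
      = (K + 1)⁻¹ * (|A.det| * ‖w‖) := by rw [hdet]; ring
    _ ≤ (K + 1)⁻¹ * (K * |(A *ᵥ WithLp.ofLp w) i|) := by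
        gcongr (K + 1)⁻¹ * ?_
        simpa [hi, Real.norm_eq_abs] using abs_det_mul_euclidean_norm_le hA w
    _ ≤ |(A *ᵥ WithLp.ofLp w) i| := by
        rw [← mul_assoc]
        refine mul_le_of_le_one_left (abs_nonneg _) ?_
        rw [inv_mul_le_one₀ (by positivity)]; linarith
    _ = |inner ℝ (u i) w| := by rw [hAw]
end

section
/- Let a_1,…,a_p ∈ Z^d be vectors with pairwise distinct Euclidean norms, all contained in the ball of radius N ≥ 1, and let m ∈ [1,2]. Then the absolute value of the p×p determinant D whose (j,l) entry is d^j ω_{a_l}/dm^j (where ω_a(m) = sqrt(|a|^4+m)) satisfies |D| ≥ C N^{−3p^2 + p} for a constant C > 0 depending only on p. -/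
/-- Euclidean norm of an integer vector in `ℤ^d`. -/
noncomputable def znorm {d : ℕ} (a : Fin d → ℤ) : ℝ :=
  Real.sqrt (∑ i, ((a i : ℝ)) ^ 2)

/-! The `n`-th derivative of `√(b + t)` is `c_n (b + t) ^ (1/2 - n)` with
`c_n = (1/2)(1/2 - 1)⋯(1/2 - n + 1) ≠ 0`. Hence, with `x_l = (|a_l|⁴ + m)⁻¹`, row `j` of the
matrix is `c_{j+1}` times `√x_l · x_l ^ j`, and the determinant is `∏ c_{j+1} · ∏ √x_l` times the
Vandermonde determinant of the `x_l`. The `u_l = |a_l|²` are distinct integers in `[0, N²]`, so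
`√x_l ≥ 1/(3N²)` and `|x_k - x_l| = |u_k² - u_l²| x_k x_l ≥ u/(3N⁴ · 3u²) ≥ 1/(9N⁶)`, where
`u ≥ 1` is the larger of `u_k, u_l`; the exponent is `-2p - 6·(p choose 2) = -3p² + p`. -/

open Finset Matrix

lemma descPochhammer_eval_half_ne_zero (n : ℕ) : (descPochhammer ℝ n).eval (1 / 2) ≠ 0 := by
  rw [descPochhammer_eval_eq_prod_range, prod_ne_zero_iff]
  intro j _ h
  have : ((2 * j : ℕ) : ℝ) = 1 := by push_cast; linarith
  have : 2 * j = 1 := by exact_mod_cast this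
  omega

lemma iteratedDeriv_sqrt_const_add (n : ℕ) (b t : ℝ) :
    iteratedDeriv n (fun s => √(b + s)) t =
      (descPochhammer ℝ n).eval (1 / 2) * (b + t) ^ ((1 / 2 : ℝ) - n) := by
  simp_rw [Real.sqrt_eq_rpow]
  rw [iteratedDeriv_comp_const_add n (fun x => x ^ (1 / 2 : ℝ)), iteratedDeriv_eq_iterate]
  exact Real.iter_deriv_rpow_const _ _ _

lemma Real.rpow_half_sub_succ {y : ℝ} (hy : 0 < y) (j : ℕ) :
    y ^ ((1 / 2 : ℝ) - (j + 1 : ℕ)) = (√y)⁻¹ * y⁻¹ ^ j := by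
  rw [show (1 / 2 : ℝ) - (j + 1 : ℕ) = -(1 / 2) + -(j : ℝ) by push_cast; ring,
    Real.rpow_add hy, Real.rpow_neg hy.le, Real.rpow_neg hy.le, Real.rpow_natCast,
    Real.sqrt_eq_rpow, inv_pow]

theorem Matrix.det_of_mul_mul_pow {R : Type*} [CommRing R] {n : ℕ} (c s x : Fin n → R) :
    (of fun j l : Fin n => c j * (s l * x l ^ (j : ℕ))).det =
      (∏ j, c j) * (∏ l, s l) * (vandermonde x).det := by
  have hcol := det_mul_column c (of fun j l : Fin n => s l * x l ^ (j : ℕ))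
  have hrow := det_mul_row s (of fun j l : Fin n => x l ^ (j : ℕ))
  simp only [of_apply] at hcol hrow
  rw [hcol, hrow, ← det_transpose (vandermonde x), mul_assoc]
  rfl

theorem Fin.sum_card_Ioi (n : ℕ) : ∑ i : Fin n, #(Ioi i) = n.choose 2 := by
  simp only [Fin.card_Ioi]
  rw [Fin.sum_univ_eq_sum_range (fun i => n - 1 - i), sum_range_reflect (fun i => i) n,
    sum_range_id, Nat.choose_two_right]

theorem pow_choose_two_le_abs_det_vandermonde {R : Type*} [CommRing R] [LinearOrder R]
    [IsStrictOrderedRing R] {n : ℕ} (x : Fin n → R) {δ : R} (hδ : 0 ≤ δ)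
    (h : ∀ i j, i < j → δ ≤ |x j - x i|) :
    δ ^ n.choose 2 ≤ |(vandermonde x).det| := by
  rw [det_vandermonde, abs_prod, ← Fin.sum_card_Ioi, ← prod_pow_eq_pow_sum]
  refine prod_le_prod (fun _ _ => by positivity) fun i _ => ?_
  rw [abs_prod, ← prod_const]
  exact prod_le_prod (fun _ _ => hδ) fun j hj => h i j (mem_Ioi.mp hj)

lemma le_inv_sq_add_sub_inv_sq_add {M m u w : ℝ} (hm : 0 < m) (hm2 : m ≤ 2) (hw : 0 ≤ w)
    (hwu : w + 1 ≤ u) (huM : u ≤ M) :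
    (9 * M ^ 3)⁻¹ ≤ (w ^ 2 + m)⁻¹ - (u ^ 2 + m)⁻¹ := by
  have hu : 1 ≤ u := by linarith
  have hM : 1 ≤ M := hu.trans huM
  have hw' : 0 < w ^ 2 + m := by positivity
  have hu' : 0 < u ^ 2 + m := by positivity
  have hnum : u ≤ u ^ 2 - w ^ 2 := by nlinarith
  have hden : (w ^ 2 + m) * (u ^ 2 + m) ≤ 9 * M ^ 2 * u ^ 2 := by
    have h1 : w ^ 2 + m ≤ 3 * M ^ 2 := by nlinarith
    have h2 : u ^ 2 + m ≤ 3 * u ^ 2 := by nlinarith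
    nlinarith [mul_le_mul h1 h2 hu'.le (by positivity)]
  calc (9 * M ^ 3)⁻¹ ≤ u / (9 * M ^ 2 * u ^ 2) := by
        rw [show u / (9 * M ^ 2 * u ^ 2) = (9 * M ^ 2 * u)⁻¹ by field_simp]
        have := mul_le_mul_of_nonneg_left huM (by positivity : (0 : ℝ) ≤ 9 * M ^ 2)
        exact inv_anti₀ (by positivity) (by linarith [show 9 * M ^ 2 * M = 9 * M ^ 3 by ring])
    _ ≤ (u ^ 2 - w ^ 2) / ((w ^ 2 + m) * (u ^ 2 + m)) :=
        div_le_div₀ (by linarith) hnum (by positivity) hden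
    _ = (w ^ 2 + m)⁻¹ - (u ^ 2 + m)⁻¹ := by field_simp; ring

lemma le_abs_inv_sq_add_sub_inv_sq_add {M m : ℝ} (hm : 0 < m) (hm2 : m ≤ 2) {u w : ℤ} (hu : 0 ≤ u)
    (hw : 0 ≤ w) (huw : u ≠ w) (huM : u ≤ M) (hwM : w ≤ M) :
    (9 * M ^ 3)⁻¹ ≤ |((u : ℝ) ^ 2 + m)⁻¹ - ((w : ℝ) ^ 2 + m)⁻¹| := by
  wlog hlt : w < u generalizing u w
  · rw [abs_sub_comm]
    exact this hw hu huw.symm hwM huM (lt_of_le_of_ne (not_lt.mp hlt) huw)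
  have hwu : (w : ℝ) + 1 ≤ u := by exact_mod_cast hlt
  have h := le_inv_sq_add_sub_inv_sq_add hm hm2 (by exact_mod_cast hw) hwu huM
  rw [abs_sub_comm]
  exact h.trans (le_abs_self _)

lemma inv_le_inv_sqrt_sq_add {M m u : ℝ} (hM : 1 ≤ M) (hm : 0 < m) (hm2 : m ≤ 2) (hu : 0 ≤ u)
    (huM : u ≤ M) : (3 * M)⁻¹ ≤ (√(u ^ 2 + m))⁻¹ := by
  have h : u ^ 2 + m ≤ (3 * M) ^ 2 := by nlinarith
  gcongr
  exact (Real.sqrt_le_sqrt h).trans_eq (Real.sqrt_sq (by positivity))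

theorem det_iteratedDeriv_sqrt_const_add {p : ℕ} (b : Fin p → ℝ) {m : ℝ}
    (hb : ∀ l, 0 < b l + m) :
    (of fun j l : Fin p => iteratedDeriv (j + 1) (fun t => √(b l + t)) m).det =
      (∏ j : Fin p, (descPochhammer ℝ (j + 1)).eval (1 / 2)) * (∏ l, (√(b l + m))⁻¹) *
        (vandermonde fun l => (b l + m)⁻¹).det := by
  rw [← det_of_mul_mul_pow]
  congr 1
  ext j l
  rw [of_apply, of_apply, iteratedDeriv_sqrt_const_add, Real.rpow_half_sub_succ (hb l)]

theorem le_abs_det_iteratedDeriv_sqrt_sq_add {p : ℕ} {M m : ℝ} (hM : 1 ≤ M) (hm : 0 < m)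
    (hm2 : m ≤ 2) (u : Fin p → ℤ) (hu : ∀ l, 0 ≤ u l) (huM : ∀ l, u l ≤ M)
    (hinj : Function.Injective u) :
    |∏ j : Fin p, (descPochhammer ℝ (j + 1)).eval (1 / 2)| * (3 * M)⁻¹ ^ p *
        (9 * M ^ 3)⁻¹ ^ p.choose 2 ≤
      |(of fun j l : Fin p => iteratedDeriv (j + 1) (fun t => √((u l : ℝ) ^ 2 + t)) m).det| := by
  rw [det_iteratedDeriv_sqrt_const_add _ fun l => by positivity, abs_mul, abs_mul, mul_assoc,
    mul_assoc]
  gcongr ?_ * (?_ * ?_)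
  · rw [abs_prod, ← Fin.prod_const]
    exact prod_le_prod (fun _ _ => by positivity) fun l _ =>
      (inv_le_inv_sqrt_sq_add hM hm hm2 (by exact_mod_cast hu l) (huM l)).trans (le_abs_self _)
  · exact pow_choose_two_le_abs_det_vandermonde _ (by positivity) fun i j hij =>
      le_abs_inv_sq_add_sub_inv_sq_add hm hm2 (hu j) (hu i) (hinj.ne hij.ne') (huM j) (huM i)

lemma zpow_neg_three_mul_sq_add_self {K : Type*} [Field K] (N : K) (p : ℕ) :
    N ^ (-3 * (p : ℤ) ^ 2 + p) = (N ^ 2)⁻¹ ^ p * (N ^ 6)⁻¹ ^ p.choose 2 := by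
  have hc : (p.choose 2 : ℚ) * 2 = p * (p - 1) := by
    rw [Nat.cast_choose_two]; ring
  have h : -3 * (p : ℤ) ^ 2 + p = -((2 * p + 6 * p.choose 2 : ℕ) : ℤ) := by
    have : (p.choose 2 : ℤ) * 2 = p * (p - 1) := by exact_mod_cast hc
    push_cast; linear_combination 3 * this
  rw [h, _root_.zpow_neg, zpow_natCast, pow_add, pow_mul, pow_mul, mul_inv, inv_pow, inv_pow]

lemma znorm_eq_sqrt {d : ℕ} (a : Fin d → ℤ) : znorm a = √((∑ i, a i ^ 2 : ℤ) : ℝ) := by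
  rw [znorm]
  push_cast
  rfl

theorem derivative_determinant_lower_bound_general (p : ℕ) :
    ∃ C : ℝ, 0 < C ∧
      ∀ (d : ℕ) (N : ℝ), 1 ≤ N →
        ∀ a : Fin p → Fin d → ℤ,
          (∀ j k, j ≠ k → znorm (a j) ≠ znorm (a k)) →
          (∀ j, znorm (a j) ≤ N) →
          ∀ m ∈ Set.Icc (1 : ℝ) 2,
            C * N ^ (-3 * (p : ℤ) ^ 2 + (p : ℤ)) ≤
              |(Matrix.of fun j l : Fin p =>
                  iteratedDeriv (j.1 + 1)
                    (fun t : ℝ => Real.sqrt (znorm (a l) ^ 4 + t)) m).det| := by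
  have hc : 0 < |∏ j : Fin p, (descPochhammer ℝ (j + 1)).eval (1 / 2)| :=
    abs_pos.mpr (prod_ne_zero_iff.mpr fun j _ => descPochhammer_eval_half_ne_zero _)
  refine ⟨|∏ j : Fin p, (descPochhammer ℝ (j + 1)).eval (1 / 2)| * 3⁻¹ ^ p * 9⁻¹ ^ p.choose 2,
    by positivity, ?_⟩
  rintro d N hN a hdist hle m ⟨hm1, hm2⟩
  set u : Fin p → ℤ := fun l => ∑ i, a l i ^ 2
  have hu : ∀ l, 0 ≤ u l := fun l => sum_nonneg fun i _ => sq_nonneg _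
  have hzn : ∀ l, znorm (a l) = √(u l) := fun l => znorm_eq_sqrt (a l)
  have hinj : Function.Injective u := fun j k hjk => by
    by_contra hne
    exact hdist j k hne (by rw [hzn, hzn, hjk])
  have huN : ∀ l, u l ≤ N ^ 2 := fun l =>
    (Real.sqrt_le_left (by positivity)).mp (hzn l ▸ hle l)
  have key := le_abs_det_iteratedDeriv_sqrt_sq_add (one_le_pow₀ hN) (by linarith) hm2 u hu huN hinj
  have h4 : ∀ l, znorm (a l) ^ 4 = (u l : ℝ) ^ 2 := fun l => by
    rw [hzn, show 4 = 2 * 2 by rfl, pow_mul, Real.sq_sqrt (by exact_mod_cast hu l)]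
  simp only [h4]
  convert key using 1
  rw [zpow_neg_three_mul_sq_add_self]
  simp only [mul_inv, mul_pow]
  ring

theorem derivative_determinant_lower_bound (p : ℕ) (hp : 1 ≤ p) :
    ∃ C : ℝ, 0 < C ∧
      ∀ (d : ℕ) (N : ℝ), 1 ≤ N →
        ∀ a : Fin p → Fin d → ℤ,
          (∀ j k, j ≠ k → znorm (a j) ≠ znorm (a k)) →
          (∀ j, znorm (a j) ≤ N) →
          ∀ m ∈ Set.Icc (1 : ℝ) 2,
            C * N ^ (-3 * (p : ℤ) ^ 2 + (p : ℤ)) ≤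
              |(Matrix.of fun j l : Fin p =>
                  iteratedDeriv (j.1 + 1)
                    (fun t : ℝ => Real.sqrt (znorm (a l) ^ 4 + t)) m).det| :=
  derivative_determinant_lower_bound_general p
end

section
/- Let γ = (γ_1, γ_2) with γ_1 ≥ 0 and γ_2 − ϰ ≥ 0 (ϰ ≥ 0). Define the weight e_{γ,ϰ}(a,b) = C e^{γ_1 [a−b]} max([a−b],1)^{γ_2} min(⟨a⟩,⟨b⟩)^ϰ on Z^d × Z^d. Then for C sufficiently large (depending only on γ_2 and ϰ), e_{γ,ϰ}(a,b) ≤ e_{γ,0}(a,c) · e_{γ,ϰ}(c,b) for all a, b, c ∈ Z^d. -/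
/-- The pseudo-metric `[a-b] = min(|a-b|, |a+b|)` on `ℤ^d`. -/
noncomputable def pd {d : ℕ} (a b : Fin d → ℤ) : ℝ :=
  min (znorm (a - b)) (znorm (a + b))

/-- The weight `e_{γ,ϰ}(a,b) = C e^{γ₁[a-b]} max([a-b],1)^{γ₂} min(⟨a⟩,⟨b⟩)^ϰ`. -/
noncomputable def wt {d : ℕ} (C γ1 γ2 ϰ : ℝ) (a b : Fin d → ℤ) : ℝ :=
  C * Real.exp (γ1 * pd a b) * max (pd a b) 1 ^ γ2 *
    min (max 1 (znorm a)) (max 1 (znorm b)) ^ ϰ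

open Real

section MinNorm

variable {E : Type*} [SeminormedAddCommGroup E]

theorem min_norm_sub_norm_add_le (x y z : E) :
    min ‖x - z‖ ‖x + z‖ ≤ min ‖x - y‖ ‖x + y‖ + min ‖y - z‖ ‖y + z‖ := by
  have h₁ : ‖x - z‖ ≤ ‖x - y‖ + ‖y - z‖ := norm_sub_le_norm_sub_add_norm_sub x y z
  have h₂ : ‖x + z‖ ≤ ‖x - y‖ + ‖y + z‖ := by
    rw [show x + z = x - y + (y + z) by abel]; exact norm_add_le _ _
  have h₃ : ‖x + z‖ ≤ ‖x + y‖ + ‖y - z‖ := by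
    rw [show x + z = x + y - (y - z) by abel]; exact norm_sub_le _ _
  have h₄ : ‖x - z‖ ≤ ‖x + y‖ + ‖y + z‖ := by
    rw [show x - z = x + y - (y + z) by abel]; exact norm_sub_le _ _
  rw [← min_add_add_right, ← min_add_add_left, ← min_add_add_left]
  exact le_min (le_min (min_le_of_left_le h₁) (min_le_of_right_le h₂))
    (le_min (min_le_of_right_le h₃) (min_le_of_left_le h₄))

theorem norm_le_norm_add_min_norm_sub_norm_add (x y : E) :
    ‖x‖ ≤ ‖y‖ + min ‖x - y‖ ‖x + y‖ := by
  rw [← min_add_add_left]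
  refine le_min (norm_le_norm_add_norm_sub' x y) ?_
  simpa only [add_sub_cancel_right, add_comm ‖y‖] using norm_sub_le (x + y) y

end MinNorm

theorem max_one_le_two_mul_max_max_one {p q r : ℝ} (h : p ≤ q + r) :
    max p 1 ≤ 2 * max (max q 1) (max r 1) := by
  have hq : q ≤ max (max q 1) (max r 1) := (le_max_left q 1).trans (le_max_left _ _)
  have hr : r ≤ max (max q 1) (max r 1) := (le_max_left r 1).trans (le_max_right _ _)
  have h₁ : 1 ≤ max (max q 1) (max r 1) := (le_max_right q 1).trans (le_max_left _ _)
  exact max_le (by linarith) (by linarith)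

theorem min_le_one_add_mul_min {A B C s : ℝ} (hA : A ≤ C + s) (hC : 1 ≤ C) (hB : 0 ≤ B)
    (hs : 0 ≤ s) : min A B ≤ (1 + s) * min C B := by
  rcases le_total C B with h | h
  · rw [min_eq_left h]; nlinarith [min_le_left A B]
  · rw [min_eq_right h]; nlinarith [min_le_right A B]

theorem one_add_le_two_mul_max_one {s : ℝ} : 1 + s ≤ 2 * max s 1 := by
  linarith [le_max_left s 1, le_max_right s 1]

def intToEuclidean (d : ℕ) : (Fin d → ℤ) →+ EuclideanSpace ℝ (Fin d) where
  toFun a := WithLp.toLp 2 fun i => (a i : ℝ)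
  map_zero' := by ext; simp
  map_add' a b := by ext; simp

section Lattice

variable {d : ℕ}

theorem znorm_eq_norm (a : Fin d → ℤ) : znorm a = ‖intToEuclidean d a‖ := by
  simp [znorm, intToEuclidean, EuclideanSpace.norm_eq]

theorem pd_eq_min_norm (a b : Fin d → ℤ) :
    pd a b = min ‖intToEuclidean d a - intToEuclidean d b‖
      ‖intToEuclidean d a + intToEuclidean d b‖ := by
  simp only [pd, znorm_eq_norm, map_sub, map_add]

theorem pd_nonneg (a b : Fin d → ℤ) : 0 ≤ pd a b := by
  rw [pd_eq_min_norm]; positivity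

theorem pd_comm (a b : Fin d → ℤ) : pd a b = pd b a := by
  simp only [pd_eq_min_norm, norm_sub_rev, add_comm]

theorem pd_triangle (a b c : Fin d → ℤ) : pd a b ≤ pd a c + pd c b := by
  simp only [pd_eq_min_norm]; exact min_norm_sub_norm_add_le _ _ _

theorem max_one_znorm_le_add_pd (a c : Fin d → ℤ) :
    max 1 (znorm a) ≤ max 1 (znorm c) + pd a c := by
  have h := norm_le_norm_add_min_norm_sub_norm_add (intToEuclidean d a) (intToEuclidean d c)
  rw [← znorm_eq_norm, ← znorm_eq_norm, ← pd_eq_min_norm] at h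
  exact max_le (by linarith [le_max_left 1 (znorm c), pd_nonneg a c])
    (h.trans (by gcongr; exact le_max_right _ _))

theorem one_le_min_max_one_znorm (a b : Fin d → ℤ) :
    1 ≤ min (max 1 (znorm a)) (max 1 (znorm b)) :=
  le_min (le_max_left _ _) (le_max_left _ _)

theorem min_max_one_znorm_le (a b c : Fin d → ℤ) :
    min (max 1 (znorm a)) (max 1 (znorm b)) ≤
      2 * min (max (pd a c) 1) (max (pd c b) 1) * min (max 1 (znorm c)) (max 1 (znorm b)) := by
  have hB : (0 : ℝ) ≤ max 1 (znorm b) := zero_le_one.trans (le_max_left _ _)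
  have hm : (0 : ℝ) ≤ min (max 1 (znorm c)) (max 1 (znorm b)) :=
    zero_le_one.trans (one_le_min_max_one_znorm c b)
  have ha := min_le_one_add_mul_min (max_one_znorm_le_add_pd a c) (le_max_left _ _) hB
    (pd_nonneg a c)
  have hb : min (max 1 (znorm a)) (max 1 (znorm b)) ≤
      (1 + pd c b) * min (max 1 (znorm c)) (max 1 (znorm b)) := by
    have := min_le_one_add_mul_min (max_one_znorm_le_add_pd b c) (le_max_left _ _) hB
      (pd_nonneg b c)
    rw [min_self, pd_comm] at this
    exact (min_le_right _ _).trans this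
  calc _ ≤ min (1 + pd a c) (1 + pd c b) * min (max 1 (znorm c)) (max 1 (znorm b)) := by
        rw [min_mul_of_nonneg _ _ hm]; exact le_min ha hb
    _ ≤ 2 * min (max (pd a c) 1) (max (pd c b) 1) * min (max 1 (znorm c)) (max 1 (znorm b)) := by
        rw [mul_min_of_nonneg (max (pd a c) 1) (max (pd c b) 1) zero_le_two]
        gcongr <;> exact one_add_le_two_mul_max_one

end Lattice

theorem rpow_mul_rpow_le_of_le_max_of_le_min {γ ϰ u v m P M : ℝ} (hϰ : 0 ≤ ϰ) (hϰγ : ϰ ≤ γ)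
    (hu : 1 ≤ u) (hv : 1 ≤ v) (hm : 0 ≤ m) (hP₀ : 0 ≤ P) (hM₀ : 0 ≤ M)
    (hP : P ≤ 2 * max u v) (hM : M ≤ 2 * min u v * m) :
    P ^ γ * M ^ ϰ ≤ 2 ^ (γ + ϰ) * (u ^ γ * v ^ γ * m ^ ϰ) := by
  have hγ : 0 ≤ γ := hϰ.trans hϰγ
  have hmin : 1 ≤ min u v := le_min hu hv
  calc P ^ γ * M ^ ϰ ≤ (2 * max u v) ^ γ * (2 * min u v * m) ^ ϰ := by gcongr
    _ = 2 ^ γ * 2 ^ ϰ * (max u v ^ γ * min u v ^ ϰ * m ^ ϰ) := by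
        rw [mul_rpow, mul_rpow, mul_rpow] <;> first | positivity | ring
    _ ≤ 2 ^ γ * 2 ^ ϰ * (max u v ^ γ * min u v ^ γ * m ^ ϰ) := by
        gcongr
    _ = 2 ^ (γ + ϰ) * (u ^ γ * v ^ γ * m ^ ϰ) := by
        rw [← mul_rpow, max_mul_min, mul_rpow, rpow_add] <;> positivity

theorem weight_submultiplicative (γ2 ϰ : ℝ) (hϰ : 0 ≤ ϰ) (hγ2 : 0 ≤ γ2 - ϰ) :
    ∃ C0 : ℝ, 0 < C0 ∧
      ∀ C : ℝ, C0 ≤ C →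
        ∀ (d : ℕ) (γ1 : ℝ), 0 ≤ γ1 →
          ∀ a b c : Fin d → ℤ,
            wt C γ1 γ2 ϰ a b ≤ wt C γ1 γ2 0 a c * wt C γ1 γ2 ϰ c b := by
  refine ⟨2 ^ (γ2 + ϰ), by positivity, fun C hC d γ1 hγ1 a b c => ?_⟩
  have hC₀ : 0 ≤ C := (rpow_pos_of_pos two_pos _).le.trans hC
  have hexp : exp (γ1 * pd a b) ≤ exp (γ1 * pd a c) * exp (γ1 * pd c b) := by
    rw [← exp_add, ← mul_add]
    gcongr
    exact pd_triangle a b c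
  have hpoly := rpow_mul_rpow_le_of_le_max_of_le_min hϰ (sub_nonneg.mp hγ2)
    (le_max_right _ _) (le_max_right _ _) (zero_le_one.trans (one_le_min_max_one_znorm c b))
    (zero_le_one.trans (le_max_right _ _)) (zero_le_one.trans (one_le_min_max_one_znorm a b))
    (max_one_le_two_mul_max_max_one (pd_triangle a b c)) (min_max_one_znorm_le a b c)
  unfold wt
  rw [rpow_zero, mul_one]
  calc _ = C * exp (γ1 * pd a b) * (max (pd a b) 1 ^ γ2 *
          min (max 1 (znorm a)) (max 1 (znorm b)) ^ ϰ) := by ring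
    _ ≤ C * (exp (γ1 * pd a c) * exp (γ1 * pd c b)) * (C * (max (pd a c) 1 ^ γ2 *
          max (pd c b) 1 ^ γ2 * min (max 1 (znorm c)) (max 1 (znorm b)) ^ ϰ)) := by
        gcongr C * ?_ * ?_
        exact hpoly.trans (by gcongr)
    _ = _ := by ring
end

section
/- Let γ ≥ 0, −γ ≤ γ̃ ≤ γ (componentwise in R^2), and ϰ ≥ 0. Then for C sufficiently large (depending only on γ_2, ϰ), the weights satisfy e_{γ̃,ϰ}(a,0) ≤ e_{γ,ϰ}(a,b) · e_{γ̃,ϰ}(b,0) for all a, b ∈ Z^d. -/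
/-!
Write `|a|` for the Euclidean norm. Both sides of the inequality factor through the radial
profile `exp (γ₁ s) * max s 1 ^ γ₂`, since `min(⟨a⟩, ⟨0⟩) = 1`. The reverse triangle inequality,
applied to `a - b` and to `a + b`, gives `||a| - |b|| ≤ [a-b]`. With `|γ̃₁| ≤ γ₁` the exponential
factors then compare directly, and the polynomial factors satisfy the Peetre-type bound
`⟨|a|⟩ ≤ 2 ⟨[a-b]⟩ ⟨|b|⟩` in both directions, so that `⟨|a|⟩^γ̃₂ ≤ 2^γ₂ ⟨[a-b]⟩^γ₂ ⟨|b|⟩^γ̃₂`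
for `|γ̃₂| ≤ γ₂`. The factor `2^γ₂` is absorbed by one copy of `C ≥ 2^γ₂`, and the factor
`min(⟨a⟩, ⟨b⟩)^ϰ ≥ 1` of `e_{γ,ϰ}(a,b)` only helps.
-/

open Real

noncomputable def euclideanCast {d : ℕ} (a : Fin d → ℤ) : EuclideanSpace ℝ (Fin d) :=
  WithLp.toLp 2 fun i => (a i : ℝ)

lemma znorm_eq_norm_euclideanCast {d : ℕ} (a : Fin d → ℤ) : znorm a = ‖euclideanCast a‖ := by
  simp [znorm, euclideanCast, EuclideanSpace.norm_eq, sq_abs]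

lemma euclideanCast_sub {d : ℕ} (a b : Fin d → ℤ) :
    euclideanCast (a - b) = euclideanCast a - euclideanCast b := by
  ext i; simp [euclideanCast]

lemma euclideanCast_add {d : ℕ} (a b : Fin d → ℤ) :
    euclideanCast (a + b) = euclideanCast a + euclideanCast b := by
  ext i; simp [euclideanCast]

lemma abs_znorm_sub_znorm_le_pd {d : ℕ} (a b : Fin d → ℤ) : |znorm a - znorm b| ≤ pd a b := by
  simp only [pd, znorm_eq_norm_euclideanCast, euclideanCast_sub, euclideanCast_add]
  refine le_min (abs_norm_sub_norm_le _ _) ?_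
  simpa using abs_norm_sub_norm_le (euclideanCast a) (-euclideanCast b)

lemma rpow_le_rpow_mul_of_le_mul {A B K t g : ℝ} (hA : 0 < A) (hB : 0 < B) (hK : 1 ≤ K)
    (hAB : A ≤ K * B) (hBA : B ≤ K * A) (ht : |t| ≤ g) : A ^ t ≤ K ^ g * B ^ t := by
  have hquot : (A / B) ^ t ≤ K ^ |t| := by
    rcases le_or_gt 0 t with h | h
    · rw [abs_of_nonneg h]
      exact rpow_le_rpow (by positivity) ((div_le_iff₀ hB).2 hAB) h
    · rw [abs_of_neg h, ← inv_div, inv_rpow (by positivity), ← rpow_neg (by positivity)]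
      exact rpow_le_rpow (by positivity) ((div_le_iff₀ hA).2 hBA) (by linarith)
  calc A ^ t = (A / B) ^ t * B ^ t := by
        rw [div_rpow hA.le hB.le, div_mul_cancel₀ _ (by positivity)]
    _ ≤ K ^ g * B ^ t := by
      gcongr
      exact hquot.trans (rpow_le_rpow_of_exponent_le hK ht)

lemma max_one_le_two_mul_max_one_mul {s t q : ℝ} (h : s - t ≤ q) :
    max s 1 ≤ 2 * max q 1 * max t 1 := by
  have hq : 1 ≤ max q 1 := le_max_right q 1
  have ht : 1 ≤ max t 1 := le_max_right t 1
  have hsum : max s 1 ≤ max q 1 + max t 1 :=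
    max_le (by linarith [le_max_left q 1, le_max_left t 1]) (by linarith)
  nlinarith

lemma exp_mul_le_exp_mul_mul_exp_mul {s t q c g : ℝ} (hst : |s - t| ≤ q) (hc : |c| ≤ g) :
    exp (c * s) ≤ exp (g * q) * exp (c * t) := by
  rw [← exp_add, exp_le_exp]
  have : c * (s - t) ≤ g * q := calc
    c * (s - t) ≤ |c| * |s - t| := by rw [← abs_mul]; exact le_abs_self _
    _ ≤ g * q := mul_le_mul hc hst (abs_nonneg _) ((abs_nonneg c).trans hc)
  linarith

/-- `e_{γ,ϰ}(a,0) = C * radialWeight γ₁ γ₂ |a|`. -/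
noncomputable def radialWeight (γ1 γ2 s : ℝ) : ℝ :=
  exp (γ1 * s) * max s 1 ^ γ2

lemma radialWeight_pos (γ1 γ2 s : ℝ) : 0 < radialWeight γ1 γ2 s := by
  unfold radialWeight; have := le_max_right s 1; positivity

lemma radialWeight_le_mul {s t q γ1 γ2 γt1 γt2 : ℝ} (hst : |s - t| ≤ q)
    (hγ1 : |γt1| ≤ γ1) (hγ2 : |γt2| ≤ γ2) :
    radialWeight γt1 γt2 s ≤ 2 ^ γ2 * radialWeight γ1 γ2 q * radialWeight γt1 γt2 t := by
  have hpow : max s 1 ^ γt2 ≤ (2 * max q 1) ^ γ2 * max t 1 ^ γt2 :=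
    rpow_le_rpow_mul_of_le_mul (by positivity) (by positivity) (by linarith [le_max_right q 1])
      (max_one_le_two_mul_max_one_mul (le_of_abs_le hst))
      (max_one_le_two_mul_max_one_mul (le_of_abs_le ((abs_sub_comm t s).trans_le hst))) hγ2
  have hexp := exp_mul_le_exp_mul_mul_exp_mul hst hγ1
  calc radialWeight γt1 γt2 s
      ≤ (exp (γ1 * q) * exp (γt1 * t)) * ((2 * max q 1) ^ γ2 * max t 1 ^ γt2) := by
        unfold radialWeight; gcongr
    _ = 2 ^ γ2 * radialWeight γ1 γ2 q * radialWeight γt1 γt2 t := by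
        rw [mul_rpow (by norm_num) (by positivity)]; unfold radialWeight; ring

lemma wt_zero_right {d : ℕ} (C γ1 γ2 ϰ : ℝ) (a : Fin d → ℤ) :
    wt C γ1 γ2 ϰ a 0 = C * radialWeight γ1 γ2 (znorm a) := by
  have hmin : min (max 1 (znorm a)) (max 1 (znorm (0 : Fin d → ℤ))) = 1 := by
    simp [znorm]
  rw [wt, hmin, one_rpow, radialWeight]
  simp [pd, mul_assoc]

lemma mul_radialWeight_le_wt {d : ℕ} {C ϰ : ℝ} (hC : 0 ≤ C) (hϰ : 0 ≤ ϰ) (γ1 γ2 : ℝ)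
    (a b : Fin d → ℤ) : C * radialWeight γ1 γ2 (pd a b) ≤ wt C γ1 γ2 ϰ a b := by
  have hmin : 1 ≤ min (max 1 (znorm a)) (max 1 (znorm b)) :=
    le_min (le_max_left _ _) (le_max_left _ _)
  have hpos := radialWeight_pos γ1 γ2 (pd a b)
  rw [wt, ← mul_one (C * radialWeight γ1 γ2 (pd a b)), radialWeight, ← mul_assoc]
  gcongr
  exact one_le_rpow hmin hϰ

theorem weight_comparison (γ2 ϰ : ℝ) (hϰ : 0 ≤ ϰ) :
    ∃ C0 : ℝ, 0 < C0 ∧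
      ∀ C : ℝ, C0 ≤ C →
        ∀ (d : ℕ) (γ1 γt1 γt2 : ℝ), 0 ≤ γ1 → 0 ≤ γ2 →
          -γ1 ≤ γt1 → γt1 ≤ γ1 → -γ2 ≤ γt2 → γt2 ≤ γ2 →
          ∀ a b : Fin d → ℤ,
            wt C γt1 γt2 ϰ a 0 ≤ wt C γ1 γ2 ϰ a b * wt C γt1 γt2 ϰ b 0 := by
  refine ⟨2 ^ γ2, by positivity, fun C hC d γ1 γt1 γt2 _ _ hl1 hu1 hl2 hu2 a b => ?_⟩
  have hC0 : 0 ≤ C := le_trans (by positivity) hC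
  have hrad := radialWeight_le_mul (abs_znorm_sub_znorm_le_pd a b)
    (abs_le.2 ⟨hl1, hu1⟩) (abs_le.2 ⟨hl2, hu2⟩)
  have hab := radialWeight_pos γ1 γ2 (pd a b)
  have hb := radialWeight_pos γt1 γt2 (znorm b)
  calc wt C γt1 γt2 ϰ a 0
      ≤ C * (2 ^ γ2 * radialWeight γ1 γ2 (pd a b) * radialWeight γt1 γt2 (znorm b)) := by
        rw [wt_zero_right]; gcongr
    _ ≤ C * (C * radialWeight γ1 γ2 (pd a b) * radialWeight γt1 γt2 (znorm b)) := by gcongr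
    _ = (C * radialWeight γ1 γ2 (pd a b)) * (C * radialWeight γt1 γt2 (znorm b)) := by ring
    _ ≤ wt C γ1 γ2 ϰ a b * wt C γt1 γt2 ϰ b 0 := by
        rw [wt_zero_right]; gcongr; exact mul_radialWeight_le_wt hC0 hϰ γ1 γ2 a b
end

section
/- Let I ⊂ R be an open interval and f: I → R a C^j function with |f^{(j)}(x)| ≥ δ > 0 for all x ∈ I. Then for every ε > 0, the Lebesgue measure of {x ∈ I : |f(x)| < ε} is at most C (ε/δ)^{1/j}, where C depends only on the C^j norm of f on I (and on the length of I). -/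
/-!
Induction on the order `m` of the derivative bounded below. If `|F (m+1)| ≥ λ`, then `F m` is
monotone (Darboux) and, by the mean value theorem, `|F m| < τ` only on a set of measure at most
`2τ/λ`. The rest of the sublevel set of `F 0` lies in the two intervals where `F m ≥ τ` or
`F m ≤ -τ`, and on each of them the induction hypothesis applies with `λ` replaced by `τ`.
The choice `τ = λ (η/λ)^(1/(m+1))` balances the three terms, so the constants satisfy
`C (m+1) = 2 + 2 C m`, i.e. `C m = 2 (2^m - 1)`.
-/

open MeasureTheory Set

lemma Real.volume_le_ofReal_of_forall_sub_le {A : Set ℝ} {d : ℝ}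
    (h : ∀ x ∈ A, ∀ y ∈ A, x ≤ y → y - x ≤ d) : volume A ≤ ENNReal.ofReal d := by
  refine (Real.volume_le_diam A).trans (Metric.ediam_le fun x hx y hy => ?_)
  rw [edist_dist, Real.dist_eq]
  refine ENNReal.ofReal_le_ofReal ?_
  rcases le_total x y with hxy | hyx
  · rw [abs_sub_comm, abs_of_nonneg (sub_nonneg.2 hxy)]
    exact h x hx y hy hxy
  · rw [abs_of_nonneg (sub_nonneg.2 hyx)]
    exact h y hy x hx hyx

lemma Set.OrdConnected.sep_mem_of_monotoneOn_or_antitoneOn {α β : Type*} [Preorder α]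
    [Preorder β] {s : Set α} {t : Set β} {f : α → β} (hs : s.OrdConnected)
    (ht : t.OrdConnected) (hf : MonotoneOn f s ∨ AntitoneOn f s) :
    {x ∈ s | f x ∈ t}.OrdConnected := by
  obtain ⟨u, hu, hsu⟩ := hf.elim ht.preimage_monotoneOn ht.preimage_antitoneOn
  change (s ∩ f ⁻¹' t).OrdConnected
  rw [hsu]
  exact hs.inter hu

lemma ContDiffOn.hasDerivAt_iteratedDerivWithin {𝕜 F : Type*} [NontriviallyNormedField 𝕜]
    [NormedAddCommGroup F] [NormedSpace 𝕜 F] {f : 𝕜 → F} {s : Set 𝕜} {n : WithTop ℕ∞} {k : ℕ}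
    {x : 𝕜} (hf : ContDiffOn 𝕜 n f s) (hs : IsOpen s) (hk : k < n) (hx : x ∈ s) :
    HasDerivAt (iteratedDerivWithin k f s) (iteratedDerivWithin (k + 1) f s x) x := by
  rw [iteratedDerivWithin_succ, derivWithin_of_isOpen hs hx]
  exact ((hf.differentiableOn_iteratedDerivWithin hk hs.uniqueDiffOn x hx).differentiableAt
    (hs.mem_nhds hx)).hasDerivAt

lemma Real.rpow_one_div_succ_eq {q : ℝ} (hq : 0 < q) {m : ℕ} (hm : m ≠ 0) :
    (q / q ^ (1 / (m + 1 : ℝ))) ^ (1 / m : ℝ) = q ^ (1 / (m + 1 : ℝ)) := by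
  have : (m : ℝ) ≠ 0 := Nat.cast_ne_zero.2 hm
  have hquot : q / q ^ (1 / (m + 1 : ℝ)) = q ^ (1 - 1 / (m + 1 : ℝ)) := by
    rw [Real.rpow_sub hq, Real.rpow_one]
  rw [hquot, ← Real.rpow_mul hq.le]
  congr 1
  field_simp
  ring

lemma sublevel_subset_union_sublevel (s : Set ℝ) (g h : ℝ → ℝ) (η τ : ℝ) :
    {x ∈ s | |g x| < η} ⊆ {x ∈ s | |h x| < τ} ∪ {x ∈ {x ∈ s | h x ∈ Ici τ} | |g x| < η} ∪
      {x ∈ {x ∈ s | h x ∈ Iic (-τ)} | |g x| < η} := by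
  rintro x ⟨hx, hxη⟩
  rcases lt_or_ge |h x| τ with hlt | hge
  · exact .inl (.inl ⟨hx, hlt⟩)
  rcases le_abs'.1 hge with hneg | hpos
  · exact .inr ⟨⟨hx, by simpa using hneg⟩, hxη⟩
  · exact .inl (.inr ⟨⟨hx, hpos⟩, hxη⟩)

section DerivLowerBound

variable {s : Set ℝ} {h h' : ℝ → ℝ} {lam : ℝ}

lemma mul_sub_le_abs_sub_of_le_abs_deriv (hs : s.OrdConnected)
    (hh : ∀ x ∈ s, HasDerivAt h (h' x) x) (hlam : ∀ x ∈ s, lam ≤ |h' x|) {x y : ℝ}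
    (hx : x ∈ s) (hy : y ∈ s) (hxy : x ≤ y) : lam * (y - x) ≤ |h y - h x| := by
  rcases hxy.eq_or_lt with rfl | hlt
  · simp
  have hxy_sub : Icc x y ⊆ s := hs.out hx hy
  obtain ⟨c, hc, hslope⟩ := exists_hasDerivAt_eq_slope h h' hlt
    (HasDerivAt.continuousOn fun z hz => hh z (hxy_sub hz))
    (fun z hz => hh z (hxy_sub (Ioo_subset_Icc_self hz)))
  have hpos : 0 < y - x := sub_pos.2 hlt
  calc lam * (y - x) ≤ |h' c| * (y - x) :=
        mul_le_mul_of_nonneg_right (hlam c (hxy_sub (Ioo_subset_Icc_self hc))) hpos.le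
    _ = |h y - h x| := by rw [hslope, abs_div, abs_of_pos hpos, div_mul_cancel₀ _ hpos.ne']

lemma volume_sublevel_le_of_le_abs_deriv (hs : s.OrdConnected)
    (hh : ∀ x ∈ s, HasDerivAt h (h' x) x) (hlam0 : 0 < lam) (hlam : ∀ x ∈ s, lam ≤ |h' x|)
    (η : ℝ) : volume {x ∈ s | |h x| < η} ≤ ENNReal.ofReal (2 * η / lam) := by
  refine Real.volume_le_ofReal_of_forall_sub_le fun x hx y hy hxy => ?_
  rw [le_div_iff₀ hlam0, mul_comm]
  linarith [mul_sub_le_abs_sub_of_le_abs_deriv hs hh hlam hx.1 hy.1 hxy, abs_sub (h y) (h x),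
    hx.2, hy.2]

lemma monotoneOn_or_antitoneOn_of_deriv_ne_zero (hs : s.OrdConnected)
    (hh : ∀ x ∈ s, HasDerivAt h (h' x) x) (hne : ∀ x ∈ s, h' x ≠ 0) :
    MonotoneOn h s ∨ AntitoneOn h s := by
  have hcont : ContinuousOn h s := HasDerivAt.continuousOn hh
  have hdiff : DifferentiableOn ℝ h (interior s) := fun x hx =>
    (hh x (interior_subset hx)).differentiableAt.differentiableWithinAt
  rcases hasDerivWithinAt_forall_lt_or_forall_gt_of_forall_ne hs.convex
    (fun x hx => (hh x hx).hasDerivWithinAt) hne with hneg | hpos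
  · refine .inr (antitoneOn_of_deriv_nonpos hs.convex hcont hdiff fun x hx => ?_)
    rw [(hh x (interior_subset hx)).deriv]
    exact (hneg x (interior_subset hx)).le
  · refine .inl (monotoneOn_of_deriv_nonneg hs.convex hcont hdiff fun x hx => ?_)
    rw [(hh x (interior_subset hx)).deriv]
    exact (hpos x (interior_subset hx)).le

end DerivLowerBound

theorem volume_sublevel_le_of_le_abs_iteratedDeriv {s : Set ℝ} (hs : s.OrdConnected)
    {F : ℕ → ℝ → ℝ} {m : ℕ} (hm : 1 ≤ m) (hF : ∀ k < m, ∀ x ∈ s, HasDerivAt (F k) (F (k + 1) x) x)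
    {lam η : ℝ} (hlam0 : 0 < lam) (hη : 0 < η) (hlam : ∀ x ∈ s, lam ≤ |F m x|) :
    volume {x ∈ s | |F 0 x| < η} ≤
      ENNReal.ofReal (2 * (2 ^ m - 1) * (η / lam) ^ (1 / m : ℝ)) := by
  induction m, hm using Nat.le_induction generalizing s lam η with
  | base =>
    convert volume_sublevel_le_of_le_abs_deriv hs (hF 0 one_pos) hlam0 hlam η using 2
    norm_num
    ring
  | succ m hm ih =>
    set t := (η / lam) ^ (1 / (m + 1 : ℝ)) with ht_def
    have hτ : 0 < lam * t := by positivity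
    have hmono := monotoneOn_or_antitoneOn_of_deriv_ne_zero hs (hF m m.lt_succ_self)
      fun x hx => abs_pos.1 (hlam0.trans_le (hlam x hx))
    have hpiece : ∀ u : Set ℝ, u.OrdConnected → (∀ y ∈ u, lam * t ≤ |y|) →
        volume {x ∈ {x ∈ s | F m x ∈ u} | |F 0 x| < η} ≤ ENNReal.ofReal (2 * (2 ^ m - 1) * t) := by
      intro u hu hτu
      have := ih (hs.sep_mem_of_monotoneOn_or_antitoneOn hu hmono)
        (fun k hk x hx => hF k (hk.trans m.lt_succ_self) x hx.1) hτ hη fun x hx => hτu _ hx.2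
      rwa [← div_div, ht_def, Real.rpow_one_div_succ_eq (by positivity) (by omega)] at this
    calc volume {x ∈ s | |F 0 x| < η}
        ≤ volume {x ∈ s | |F m x| < lam * t} +
          volume {x ∈ {x ∈ s | F m x ∈ Ici (lam * t)} | |F 0 x| < η} +
          volume {x ∈ {x ∈ s | F m x ∈ Iic (-(lam * t))} | |F 0 x| < η} :=
        (measure_mono (sublevel_subset_union_sublevel s (F 0) (F m) η (lam * t))).trans
          ((measure_union_le _ _).trans (add_le_add_left (measure_union_le _ _) _))
      _ ≤ ENNReal.ofReal (2 * (lam * t) / lam) + ENNReal.ofReal (2 * (2 ^ m - 1) * t) +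
          ENNReal.ofReal (2 * (2 ^ m - 1) * t) := by
        gcongr
        · exact volume_sublevel_le_of_le_abs_deriv hs (hF m m.lt_succ_self) hlam0 hlam _
        · exact hpiece _ ordConnected_Ici fun y hy => hy.trans (le_abs_self y)
        · exact hpiece _ ordConnected_Iic fun y hy => le_neg.1 hy |>.trans (neg_le_abs y)
      _ = ENNReal.ofReal (2 * (2 ^ (m + 1) - 1) * (η / lam) ^ (1 / (m + 1 : ℕ) : ℝ)) := by
        have hcoef : 0 ≤ 2 * (2 ^ m - 1) * t := by
          have : (1 : ℝ) ≤ 2 ^ m := one_le_pow₀ one_le_two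
          positivity
        rw [← ENNReal.ofReal_add (by positivity) hcoef,
          ← ENNReal.ofReal_add (by positivity) hcoef]
        congr 1
        push_cast
        field_simp
        ring

theorem sublevel_measure_bound (j : ℕ) (hj : 1 ≤ j) (M L : ℝ) :
    ∃ C : ℝ, 0 < C ∧
      ∀ (a b : ℝ) (f : ℝ → ℝ) (δ : ℝ), 0 < δ → b - a ≤ L →
        ContDiffOn ℝ j f (Set.Ioo a b) →
        (∀ i ≤ j, ∀ x ∈ Set.Ioo a b,
          |iteratedDerivWithin i f (Set.Ioo a b) x| ≤ M) →
        (∀ x ∈ Set.Ioo a b, δ ≤ |iteratedDerivWithin j f (Set.Ioo a b) x|) →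
        ∀ ε > 0,
          volume {x ∈ Set.Ioo a b | |f x| < ε} ≤
            ENNReal.ofReal (C * (ε / δ) ^ ((1 : ℝ) / j)) := by
  have hC : (1 : ℝ) < 2 ^ j := one_lt_pow₀ one_lt_two (by omega)
  refine ⟨2 * (2 ^ j - 1), by linarith, fun a b f δ hδ _ hf _ hlb ε hε => ?_⟩
  simpa using volume_sublevel_le_of_le_abs_iteratedDeriv
    (F := fun k => iteratedDerivWithin k f (Ioo a b)) ordConnected_Ioo hj
    (fun k hk x hx => hf.hasDerivAt_iteratedDerivWithin isOpen_Ioo (by exact_mod_cast hk) hx)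
    hδ hε hlb
end
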